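/- arXiv:math/0107227 — 3 statements merged into one kernel-verified Lean document; each statement's English description precedes it below -/
import Mathlib

section
/- An n × n integer matrix with determinant ±1 can be obtained from the identity matrix by a finite sequence of row operations, each of which either negates a row or adds one row to another row. -/
/-!
Row moves are reversible and preserve `IsUnit det`, so it suffices to reduce `A` to `1`.
Euclid's algorithm on the first column (replace an entry by its remainder modulo a nonzero entry
of smaller absolute value, which lowers the sum of absolute values) ends with a single nonzero
entry; it divides `det A`, so it is `±1`, and it is moved to the top and normalised to `1`.
Below the first row then sits a unimodular matrix of size `n`, reduced to `1` by induction
(moves on it lift to moves of the big matrix), after which the first row is cleared using the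
rows of the identity below it.
-/

/-- A row move: negate a row, or add one row to another row. -/
def RowMove (n : ℕ) (A B : Matrix (Fin n) (Fin n) ℤ) : Prop :=
  (∃ i, B = A.updateRow i (-(A i))) ∨
  (∃ i j, i ≠ j ∧ B = A.updateRow j (A j + A i))

open Matrix

namespace RowMove

variable {n : ℕ}

local infix:50 " ⇝ " => Relation.ReflTransGen (RowMove _)

theorem reach_neg (A : Matrix (Fin n) (Fin n) ℤ) (i : Fin n) : A ⇝ A.updateRow i (-A i) :=
  .single (.inl ⟨i, rfl⟩)

theorem reach_add (A : Matrix (Fin n) (Fin n) ℤ) {i j : Fin n} (hij : i ≠ j) :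
    A ⇝ A.updateRow j (A j + A i) :=
  .single (.inr ⟨i, j, hij, rfl⟩)

theorem reach_add_nsmul (A : Matrix (Fin n) (Fin n) ℤ) {i j : Fin n} (hij : i ≠ j) (k : ℕ) :
    A ⇝ A.updateRow j (A j + k • A i) := by
  induction k with
  | zero => rw [zero_smul, add_zero, updateRow_eq_self]
  | succ k ih =>
    have step := reach_add (A.updateRow j (A j + k • A i)) hij
    rw [updateRow_self, updateRow_ne hij, updateRow_idem, add_assoc, ← succ_nsmul] at step
    exact ih.trans step

theorem reach_add_zsmul (A : Matrix (Fin n) (Fin n) ℤ) {i j : Fin n} (hij : i ≠ j) (c : ℤ) :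
    A ⇝ A.updateRow j (A j + c • A i) := by
  obtain ⟨k, rfl | rfl⟩ := Int.eq_nat_or_neg c
  · simpa only [natCast_zsmul] using reach_add_nsmul A hij k
  · have h₁ := reach_neg A j
    have h₂ := reach_add_nsmul (A.updateRow j (-A j)) hij k
    rw [updateRow_self, updateRow_ne hij, updateRow_idem] at h₂
    have h₃ := reach_neg (A.updateRow j (-A j + k • A i)) j
    rw [updateRow_self, updateRow_idem, neg_add, neg_neg] at h₃
    rw [neg_smul, natCast_zsmul]
    exact h₁.trans (h₂.trans h₃)

theorem reach_add_sum_smul (A : Matrix (Fin n) (Fin n) ℤ) {j : Fin n} (c : Fin n → ℤ)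
    {s : Finset (Fin n)} (hj : j ∉ s) : A ⇝ A.updateRow j (A j + ∑ i ∈ s, c i • A i) := by
  induction s using Finset.induction_on with
  | empty => rw [Finset.sum_empty, add_zero, updateRow_eq_self]
  | insert i s hi ih =>
    have hij : i ≠ j := fun h => hj (h ▸ Finset.mem_insert_self i s)
    have step := reach_add_zsmul (A.updateRow j (A j + ∑ k ∈ s, c k • A k)) hij (c i)
    rw [updateRow_self, updateRow_ne hij, updateRow_idem, add_assoc, add_comm (∑ k ∈ s, _)] at step
    rw [Finset.sum_insert hi]
    exact (ih (fun h => hj (Finset.mem_insert_of_mem h))).trans step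

theorem reach_smul_of_isUnit (A : Matrix (Fin n) (Fin n) ℤ) (i : Fin n) {u : ℤ} (hu : IsUnit u) :
    A ⇝ A.updateRow i (u • A i) := by
  rcases Int.isUnit_iff.mp hu with rfl | rfl
  · rw [one_smul, updateRow_eq_self]
  · rw [neg_one_smul]; exact reach_neg A i

theorem reach_of_rowMove_symm {A B : Matrix (Fin n) (Fin n) ℤ} (h : RowMove n A B) : B ⇝ A := by
  rcases h with ⟨i, rfl⟩ | ⟨i, j, hij, rfl⟩
  · simpa using reach_neg (A.updateRow i (-A i)) i
  · simpa [updateRow_ne hij] using reach_add_zsmul (A.updateRow j (A j + A i)) hij (-1)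

theorem reach_symm {A B : Matrix (Fin n) (Fin n) ℤ} (h : A ⇝ B) : B ⇝ A := by
  induction h with
  | refl => exact .refl
  | tail _ hBC ih => exact (reach_of_rowMove_symm hBC).trans ih

theorem isUnit_det_of_rowMove {A B : Matrix (Fin n) (Fin n) ℤ} (h : RowMove n A B)
    (hA : IsUnit A.det) : IsUnit B.det := by
  rcases h with ⟨i, rfl⟩ | ⟨i, j, hij, rfl⟩
  · rw [← neg_one_smul ℤ (A i), det_updateRow_smul, updateRow_eq_self, neg_one_mul]
    exact hA.neg
  · rwa [det_updateRow_add_self A hij.symm]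

theorem isUnit_det_of_reach {A B : Matrix (Fin n) (Fin n) ℤ} (h : A ⇝ B)
    (hA : IsUnit A.det) : IsUnit B.det := by
  induction h with
  | refl => exact hA
  | tail _ hBC ih => exact isUnit_det_of_rowMove hBC ih

def columnWeight (A : Matrix (Fin n) (Fin n) ℤ) (j : Fin n) : ℕ := ∑ i, (A i j).natAbs

theorem exists_reach_columnWeight_lt {A : Matrix (Fin n) (Fin n) ℤ} {i j k : Fin n} (hik : i ≠ k)
    (hi : A i j ≠ 0) (hle : (A i j).natAbs ≤ (A k j).natAbs) :
    ∃ B, A ⇝ B ∧ columnWeight B j < columnWeight A j := by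
  set B := A.updateRow k (A k + (-(A k j / A i j)) • A i)
  have hBk : B k j = A k j % A i j := by
    simp only [B, updateRow_self, Pi.add_apply, Pi.smul_apply, smul_eq_mul, Int.emod_def]
    ring
  have hlt : (B k j).natAbs < (A k j).natAbs := by
    rw [hBk]
    calc (A k j % A i j).natAbs < |A i j|.natAbs :=
          Int.natAbs_lt_natAbs_of_nonneg_of_lt (Int.emod_nonneg _ hi) (Int.emod_lt_abs _ hi)
      _ ≤ (A k j).natAbs := by rwa [Int.natAbs_abs]
  refine ⟨B, reach_add_zsmul A hik _, Finset.sum_lt_sum (fun l _ => ?_) ⟨k, Finset.mem_univ k, hlt⟩⟩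
  rcases eq_or_ne l k with rfl | hl
  · exact hlt.le
  · simp only [B, updateRow_ne hl, le_refl]

theorem isUnit_apply_of_isUnit_det {A : Matrix (Fin n) (Fin n) ℤ} (hA : IsUnit A.det)
    {j q : Fin n} (hq : ∀ k, k ≠ q → A k j = 0) : IsUnit (A q j) := by
  have hcol : A.updateCol j (A q j • Pi.single q 1) = A := by
    ext k l
    rcases eq_or_ne l j with rfl | hl
    · rcases eq_or_ne k q with rfl | hk <;> simp [*]
    · simp [hl]
  have hdet := det_updateCol_smul A j (A q j) (Pi.single q 1)
  rw [hcol] at hdet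
  exact isUnit_of_dvd_unit (Dvd.intro _ hdet.symm) hA

theorem exists_reach_column_eq_single_of_column_eq_single {A : Matrix (Fin n) (Fin n) ℤ}
    {j q : Fin n} (hA : Aᵀ j = Pi.single q 1) (p : Fin n) :
    ∃ B, A ⇝ B ∧ Bᵀ j = Pi.single p 1 := by
  rcases eq_or_ne q p with rfl | hqp
  · exact ⟨A, .refl, hA⟩
  set A₁ := A.updateRow p (A p + A q)
  refine ⟨A₁.updateRow q (A₁ q + (-1 : ℤ) • A₁ p),
    (reach_add A hqp).trans (reach_add_zsmul A₁ hqp.symm (-1)), funext fun i => ?_⟩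
  have hA' : ∀ k, A k j = (Pi.single q 1 : Fin n → ℤ) k := congrFun hA
  by_cases hiq : i = q <;> by_cases hip : i = p <;> simp_all [A₁]

theorem exists_reach_column_eq_single_of_eq_zero {A : Matrix (Fin n) (Fin n) ℤ}
    (hA : IsUnit A.det) {j q : Fin n} (hq : ∀ k, k ≠ q → A k j = 0) (p : Fin n) :
    ∃ B, A ⇝ B ∧ Bᵀ j = Pi.single p 1 := by
  have hu := isUnit_apply_of_isUnit_det hA hq
  have hA₁ : (A.updateRow q (A q j • A q))ᵀ j = Pi.single q 1 := by
    funext i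
    rcases eq_or_ne i q with rfl | hi
    · simp [Int.isUnit_mul_self hu]
    · simp [hi, hq i hi]
  obtain ⟨B, hB, hBj⟩ := exists_reach_column_eq_single_of_column_eq_single hA₁ p
  exact ⟨B, (reach_smul_of_isUnit A q hu).trans hB, hBj⟩

theorem exists_reach_column_eq_single (A : Matrix (Fin n) (Fin n) ℤ) (hA : IsUnit A.det)
    (j p : Fin n) : ∃ B, A ⇝ B ∧ Bᵀ j = Pi.single p 1 := by
  obtain ⟨w, hw⟩ : ∃ w, columnWeight A j = w := ⟨_, rfl⟩
  induction w using Nat.strong_induction_on generalizing A with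
  | _ w ih =>
    by_cases hpair : ∃ i k, i ≠ k ∧ A i j ≠ 0 ∧ (A i j).natAbs ≤ (A k j).natAbs
    · obtain ⟨i, k, hik, hi, hle⟩ := hpair
      obtain ⟨B, hAB, hlt⟩ := exists_reach_columnWeight_lt hik hi hle
      obtain ⟨C, hBC, hC⟩ := ih _ (hw ▸ hlt) B (isUnit_det_of_reach hAB hA) rfl
      exact ⟨C, hAB.trans hBC, hC⟩
    · push Not at hpair
      obtain ⟨q, hq⟩ : ∃ q, A q j ≠ 0 := by
        by_contra! h
        exact not_isUnit_zero (det_eq_zero_of_column_eq_zero j h ▸ hA)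
      refine exists_reach_column_eq_single_of_eq_zero hA (q := q) (fun k hk => ?_) p
      by_contra hk0
      exact lt_asymm (hpair q k hk.symm hq) (hpair k q hk hk0)

def extendTop (r : Fin (n + 1) → ℤ) (M : Matrix (Fin n) (Fin n) ℤ) :
    Matrix (Fin (n + 1)) (Fin (n + 1)) ℤ :=
  of (vecCons r fun i => vecCons 0 (M i))

@[simp] theorem extendTop_zero (r : Fin (n + 1) → ℤ) (M : Matrix (Fin n) (Fin n) ℤ) :
    extendTop r M 0 = r := rfl

@[simp] theorem extendTop_succ (r : Fin (n + 1) → ℤ) (M : Matrix (Fin n) (Fin n) ℤ) (i : Fin n) :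
    extendTop r M i.succ = vecCons 0 (M i) := rfl

@[simp] theorem submatrix_extendTop (r : Fin (n + 1) → ℤ) (M : Matrix (Fin n) (Fin n) ℤ) :
    (extendTop r M).submatrix Fin.succ Fin.succ = M := rfl

theorem extendTop_updateRow (r : Fin (n + 1) → ℤ) (M : Matrix (Fin n) (Fin n) ℤ) (i : Fin n)
    (v : Fin n → ℤ) :
    extendTop r (M.updateRow i v) = (extendTop r M).updateRow i.succ (vecCons 0 v) := by
  ext a : 1
  cases a using Fin.cases with
  | zero => rw [updateRow_ne (Fin.succ_ne_zero i).symm]; rfl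
  | succ a =>
    rcases eq_or_ne a i with rfl | hai
    · simp
    · simp [updateRow_ne hai, updateRow_ne (Fin.succ_injective _ |>.ne hai)]

theorem rowMove_extendTop (r : Fin (n + 1) → ℤ) {M M' : Matrix (Fin n) (Fin n) ℤ}
    (h : RowMove n M M') : RowMove (n + 1) (extendTop r M) (extendTop r M') := by
  rcases h with ⟨i, rfl⟩ | ⟨i, j, hij, rfl⟩
  · exact .inl ⟨i.succ, by simp [extendTop_updateRow]⟩
  · exact .inr ⟨i.succ, j.succ, (Fin.succ_injective _).ne hij, by
      simp [extendTop_updateRow]⟩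

theorem reach_extendTop (r : Fin (n + 1) → ℤ) {M M' : Matrix (Fin n) (Fin n) ℤ} (h : M ⇝ M') :
    extendTop r M ⇝ extendTop r M' :=
  Relation.ReflTransGen.lift (extendTop r) (fun _ _ => rowMove_extendTop r) _ _ h

theorem det_extendTop (r : Fin (n + 1) → ℤ) (M : Matrix (Fin n) (Fin n) ℤ) :
    (extendTop r M).det = r 0 * M.det := by
  simp [det_succ_column_zero, Fin.sum_univ_succ]

theorem eq_extendTop {B : Matrix (Fin (n + 1)) (Fin (n + 1)) ℤ} (hB : Bᵀ 0 = Pi.single 0 1) :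
    B = extendTop (B 0) (B.submatrix Fin.succ Fin.succ) := by
  ext a b
  cases a using Fin.cases with
  | zero => rfl
  | succ a =>
    cases b using Fin.cases with
    | zero => simpa using congrFun hB a.succ
    | succ b => rfl

theorem reach_one_of_extendTop_one {r : Fin (n + 1) → ℤ} (hr : r 0 = 1) :
    extendTop r 1 ⇝ 1 := by
  have h := reach_add_sum_smul (extendTop r 1) (j := 0) (fun i => -r i)
    (s := Finset.univ.map (Fin.succEmb n)) (by simp)
  convert h using 1
  ext a b
  cases a using Fin.cases with
  | zero => cases b using Fin.cases <;> simp [hr, one_apply, (Fin.succ_ne_zero _).symm]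
  | succ a => cases b using Fin.cases <;> simp [one_apply]

theorem reach_one_of_isUnit_det : ∀ {n : ℕ} (A : Matrix (Fin n) (Fin n) ℤ), IsUnit A.det → A ⇝ 1
  | 0, A, _ => by rw [Subsingleton.elim A 1]
  | n + 1, A, hA => by
    obtain ⟨B, hAB, hB⟩ := exists_reach_column_eq_single A hA 0 0
    have hB00 : B 0 0 = 1 := by simpa using congrFun hB 0
    have hBM := eq_extendTop hB
    have hM : IsUnit (B.submatrix Fin.succ Fin.succ).det := by
      have hBdet := isUnit_det_of_reach hAB hA
      rwa [hBM, det_extendTop, hB00, one_mul] at hBdet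
    calc A ⇝ B := hAB
      _ = extendTop (B 0) (B.submatrix Fin.succ Fin.succ) := hBM
      _ ⇝ extendTop (B 0) 1 := reach_extendTop _ (reach_one_of_isUnit_det _ hM)
      _ ⇝ 1 := reach_one_of_extendTop_one hB00

end RowMove

theorem stmt_7 (n : ℕ) (A : Matrix (Fin n) (Fin n) ℤ) (hA : IsUnit A.det) :
    Relation.ReflTransGen (RowMove n) 1 A :=
  RowMove.reach_symm (RowMove.reach_one_of_isUnit_det A hA)
end

section
/- The group GL(n, ℤ) is generated by the diagonal matrices obtained from the identity by negating one diagonal entry, together with the transvections I + E_{ij} for i ≠ j. -/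
/-!
Left multiplication by the generators performs the elementary row operations: adding a row to
another and negating a row. By downward induction on a set `C` of columns (for `C` everything,
`M = 1`), every invertible `M` fixing the basis vectors `e_j`, `j ∈ C`, is a product of
generators. To add a column `k` to `C`, run the Euclidean algorithm on the entries of `M e_k`
outside `C`, using only transvections `1 + c E_{ab}` with `b ∉ C`, which fix every `e_j`,
`j ∈ C`. One nonzero entry outside `C` is left, and it is a unit because `M` is invertible.
A sign change and more such transvections then carry `M e_k` to `e_k`.
-/

open Matrix

lemma Int.exists_natAbs_add_mul_lt {x y : ℤ} (hy : y ≠ 0) (h : y.natAbs ≤ x.natAbs) :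
    ∃ ε : ℤ, (x + ε * y).natAbs < x.natAbs := by
  by_cases hs : (0 ≤ x ∧ 0 ≤ y) ∨ (x ≤ 0 ∧ y ≤ 0)
  · exact ⟨-1, by omega⟩
  · exact ⟨1, by omega⟩

lemma Subgroup.exists_mem_smul_eq_of_smul {G α : Type*} [Group G] [MulAction G α]
    {K : Subgroup G} {g : G} (hg : g ∈ K) {v w : α} (h : ∃ E ∈ K, E • g • v = w) :
    ∃ E ∈ K, E • v = w :=
  let ⟨E, hE, hEv⟩ := h
  ⟨E * g, mul_mem hE hg, by rw [mul_smul, hEv]⟩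

lemma Matrix.SpecialLinearGroup.transvection_eq_zpow {ι F : Type*} [Fintype ι] [DecidableEq ι]
    [CommRing F] {i j : ι} (hij : i ≠ j) (c : ℤ) :
    transvection hij (c : F) = transvection hij (1 : F) ^ c := by
  induction c using Int.induction_on with
  | zero => simp [transvection_coeff_zero hij]
  | succ k ih => rw [Int.cast_add, Int.cast_one, transvection_add, ih, _root_.zpow_add_one]
  | pred k ih =>
    rw [Int.cast_sub, Int.cast_one, sub_eq_add_neg, transvection_add, ih, ← transvection_inv,
      _root_.zpow_sub_one]

namespace Matrix.GeneralLinearGroup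

variable {ι : Type*} [Fintype ι] [DecidableEq ι]

section CommRing

variable {R : Type*} [CommRing R]

def transvection {i j : ι} (hij : i ≠ j) (c : R) : GL ι R :=
  SpecialLinearGroup.toGL (SpecialLinearGroup.transvection hij c)

lemma transvection_smul {i j : ι} (hij : i ≠ j) (c : R) (v : ι → R) :
    transvection hij c • v = Function.update v i (v i + c * v j) := by
  ext a
  rcases eq_or_ne a i with rfl | ha
  · simp [transvection, Units.smul_def, SpecialLinearGroup.transvection_coe, add_mulVec,
      single_mulVec]
  · simp [transvection, Units.smul_def, SpecialLinearGroup.transvection_coe, add_mulVec,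
      single_mulVec, ha]

lemma one_add_single_neg_two_mul_self (i : ι) :
    (1 + single i i (-2 : R)) * (1 + single i i (-2)) = 1 := by
  simp only [mul_add, add_mul, mul_one, one_mul, single_mul_single_same, add_assoc, ← single_add]
  norm_num

def signFlip (i : ι) : GL ι R :=
  ⟨1 + single i i (-2), 1 + single i i (-2), one_add_single_neg_two_mul_self i,
    one_add_single_neg_two_mul_self i⟩

lemma signFlip_smul (i : ι) (v : ι → R) :
    (signFlip i : GL ι R) • v = Function.update v i (-v i) := by
  ext a
  rcases eq_or_ne a i with rfl | ha
  · simp only [signFlip, Units.smul_def, smul_eq_mulVec, add_mulVec, one_mulVec, single_mulVec,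
      Pi.add_apply, Function.update_self]
    ring
  · simp [signFlip, Units.smul_def, add_mulVec, single_mulVec, ha]

lemma smul_single_one_apply (g : GL ι R) (j a : ι) :
    (g • (Pi.single j 1 : ι → R)) a = (g : Matrix ι ι R) a j := by
  simp [Units.smul_def]

def fixer (C : Finset ι) : Subgroup (GL ι R) :=
  fixingSubgroup (GL ι R) ((fun j ↦ (Pi.single j 1 : ι → R)) '' (C : Set ι))

lemma mem_fixer {C : Finset ι} {g : GL ι R} :
    g ∈ fixer C ↔ ∀ j ∈ C, g • (Pi.single j 1 : ι → R) = Pi.single j 1 := by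
  simp [fixer, mem_fixingSubgroup_iff]

lemma mem_fixer_insert {C : Finset ι} {k : ι} {g : GL ι R} :
    g ∈ fixer (insert k C) ↔
      g • (Pi.single k 1 : ι → R) = Pi.single k 1 ∧ g ∈ fixer C := by
  simp only [mem_fixer, Finset.forall_mem_insert]

lemma fixer_empty : fixer (∅ : Finset ι) = (⊤ : Subgroup (GL ι R)) := by
  simp [fixer]

lemma fixer_univ : fixer (Finset.univ : Finset ι) = (⊥ : Subgroup (GL ι R)) := by
  refine (Subgroup.eq_bot_iff_forall _).2 fun g hg ↦
    Units.ext <| ext_of_mulVec_single fun j ↦ ?_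
  rw [Units.val_one, one_mulVec, ← smul_eq_mulVec, ← Units.smul_def]
  exact mem_fixer.1 hg j (Finset.mem_univ j)

lemma transvection_mem_fixer {C : Finset ι} {i j : ι} (hij : i ≠ j) (hj : j ∉ C) (c : R) :
    transvection hij c ∈ fixer C := by
  refine mem_fixer.2 fun x hx ↦ ?_
  have hxj : j ≠ x := by rintro rfl; exact hj hx
  simp [transvection_smul, Pi.single_eq_of_ne hxj]

lemma signFlip_mem_fixer {C : Finset ι} {i : ι} (hi : i ∉ C) :
    (signFlip i : GL ι R) ∈ fixer C := by
  refine mem_fixer.2 fun x hx ↦ ?_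
  have hix : i ≠ x := by rintro rfl; exact hi hx
  simp [signFlip_smul, Pi.single_eq_of_ne hix]

theorem isUnit_apply_of_mem_fixer {C : Finset ι} {N : GL ι R} (hN : N ∈ fixer C) {k b : ι}
    (hk : k ∉ C) (hN0 : ∀ a ∉ C, a ≠ b → (N : Matrix ι ι R) a k = 0) :
    IsUnit ((N : Matrix ι ι R) b k) := by
  -- `N⁻¹` also fixes each `e_a`, `a ∈ C`, so row `k` of `N⁻¹` vanishes on `C`.
  have hinv : ∀ a ∈ C, ((N⁻¹ : GL ι R) : Matrix ι ι R) k a = 0 := fun a ha ↦ by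
    rw [← smul_single_one_apply, mem_fixer.1 (inv_mem hN) a ha,
      Pi.single_eq_of_ne (by rintro rfl; exact hk ha)]
  have h : ∑ a, ((N⁻¹ : GL ι R) : Matrix ι ι R) k a * (N : Matrix ι ι R) a k = 1 := by
    rw [← mul_apply, Units.inv_mul, one_apply_eq]
  rw [Finset.sum_eq_single_of_mem b (Finset.mem_univ b) fun a _ hab ↦ ?_] at h
  · exact IsUnit.of_mul_eq_one_right _ h
  by_cases ha : a ∈ C
  · rw [hinv a ha, zero_mul]
  · rw [hN0 a ha hab, mul_zero]

end CommRing

variable (ι) in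
def elementaryGenerators : Set (GL ι ℤ) :=
  {M | (∃ i, (M : Matrix ι ι ℤ) = 1 + single i i (-2)) ∨
    (∃ i j, i ≠ j ∧ (M : Matrix ι ι ℤ) = 1 + single i j 1)}

variable (ι) in
abbrev elementarySubgroup : Subgroup (GL ι ℤ) :=
  Subgroup.closure (elementaryGenerators ι)

lemma signFlip_mem (i : ι) : signFlip i ∈ elementarySubgroup ι :=
  Subgroup.subset_closure (Or.inl ⟨i, rfl⟩)

lemma transvection_mem {i j : ι} (hij : i ≠ j) (c : ℤ) :
    transvection hij c ∈ elementarySubgroup ι := by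
  have h1 : transvection hij (1 : ℤ) ∈ elementarySubgroup ι :=
    Subgroup.subset_closure (Or.inr ⟨i, j, hij, rfl⟩)
  rw [transvection, ← Int.cast_id (n := c), SpecialLinearGroup.transvection_eq_zpow,
    map_zpow]
  exact zpow_mem h1 c

theorem exists_smul_apply_eq_zero_of_ne {C : Finset ι} {k : ι} (hk : k ∉ C) (v : ι → ℤ) :
    ∃ E ∈ elementarySubgroup ι ⊓ fixer C, ∃ b ∉ C, ∀ a ∉ C, a ≠ b → (E • v) a = 0 := by
  induction hs : ∑ a ∈ Cᶜ, (v a).natAbs using Nat.strong_induction_on generalizing v with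
  | _ s ih =>
  by_cases hdone : ∃ b ∉ C, ∀ a ∉ C, a ≠ b → v a = 0
  · obtain ⟨b, hb, h⟩ := hdone
    exact ⟨1, one_mem _, b, hb, by simpa using h⟩
  push Not at hdone
  obtain ⟨a₁, ha₁, -, h₁⟩ := hdone k hk
  obtain ⟨a₂, ha₂, hne, h₂⟩ := hdone a₁ ha₁
  wlog hle : (v a₂).natAbs ≤ (v a₁).natAbs generalizing a₁ a₂
  · exact this a₂ ha₂ h₂ a₁ ha₁ hne.symm h₁ (le_of_not_ge hle)
  obtain ⟨ε, hε⟩ := Int.exists_natAbs_add_mul_lt h₂ hle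
  set T := transvection hne.symm ε
  have hlt : ∑ a ∈ Cᶜ, ((T • v) a).natAbs < s := by
    rw [← hs]
    refine Finset.sum_lt_sum (fun a _ ↦ ?_)
      ⟨a₁, Finset.mem_compl.2 ha₁, by simpa [T, transvection_smul]⟩
    rcases eq_or_ne a a₁ with rfl | ha
    · simpa [T, transvection_smul] using hε.le
    · simp [T, transvection_smul, ha]
  obtain ⟨E, hE, b, hb, hzero⟩ := ih _ hlt (T • v) rfl
  refine ⟨E * T, mul_mem hE ?_, b, hb, by simpa [mul_smul] using hzero⟩
  exact Subgroup.mem_inf.2 ⟨transvection_mem _ ε, transvection_mem_fixer _ ha₂ ε⟩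

theorem exists_smul_eq_single_of_apply_eq_one {C : Finset ι} {k : ι} (hk : k ∉ C)
    {v : ι → ℤ} (hv : v k = 1) :
    ∃ E ∈ elementarySubgroup ι ⊓ fixer C, E • v = Pi.single k 1 := by
  suffices ∀ s : Finset ι, ∀ v : ι → ℤ, v k = 1 → (∀ a ∉ s, a ≠ k → v a = 0) →
      ∃ E ∈ elementarySubgroup ι ⊓ fixer C, E • v = Pi.single k 1 from
    this Finset.univ v hv (by simp)
  intro s
  induction s using Finset.induction_on with
  | empty =>
    intro v hv h0
    refine ⟨1, one_mem _, funext fun a ↦ ?_⟩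
    rcases eq_or_ne a k with rfl | ha
    · simp [hv]
    · simp [ha, h0 a (Finset.notMem_empty a) ha]
  | insert a s has ih =>
    intro v hv h0
    rcases eq_or_ne a k with rfl | hak
    · exact ih v hv fun x hx hxa ↦ h0 x (by simp [hx, hxa]) hxa
    refine Subgroup.exists_mem_smul_eq_of_smul (g := transvection hak (-v a))
      (Subgroup.mem_inf.2 ⟨transvection_mem hak _, transvection_mem_fixer hak hk _⟩)
      (ih _ (by simp [transvection_smul, hak.symm, hv]) fun x hx hxk ↦ ?_)
    rcases eq_or_ne x a with rfl | hxa
    · simp [transvection_smul, hv]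
    · simp [transvection_smul, hxa, h0 x (by simp [hxa, hx]) hxk]

theorem exists_smul_eq_single_of_isUnit {C : Finset ι} {b k : ι} (hb : b ∉ C) (hk : k ∉ C)
    {v : ι → ℤ} (hv : IsUnit (v b)) :
    ∃ E ∈ elementarySubgroup ι ⊓ fixer C, E • v = Pi.single k 1 := by
  have of_apply_eq_one : ∀ w : ι → ℤ, w b = 1 →
      ∃ E ∈ elementarySubgroup ι ⊓ fixer C, E • w = Pi.single k 1 := by
    intro w hw
    rcases eq_or_ne b k with rfl | hbk
    · exact exists_smul_eq_single_of_apply_eq_one hk hw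
    · exact Subgroup.exists_mem_smul_eq_of_smul (g := transvection hbk.symm (1 - w k))
        (Subgroup.mem_inf.2 ⟨transvection_mem hbk.symm _, transvection_mem_fixer hbk.symm hb _⟩)
        (exists_smul_eq_single_of_apply_eq_one hk (by simp [transvection_smul, hw]))
  rcases Int.isUnit_iff.1 hv with h | h
  · exact of_apply_eq_one v h
  · exact Subgroup.exists_mem_smul_eq_of_smul (g := signFlip b)
      (Subgroup.mem_inf.2 ⟨signFlip_mem b, signFlip_mem_fixer hb⟩)
      (of_apply_eq_one _ (by simp [signFlip_smul, h]))

theorem exists_mul_mem_fixer_insert {C : Finset ι} {k : ι} (hk : k ∉ C) {M : GL ι ℤ}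
    (hM : M ∈ fixer C) : ∃ E ∈ elementarySubgroup ι, E * M ∈ fixer (insert k C) := by
  obtain ⟨E₁, hE₁, b, hb, hzero⟩ := exists_smul_apply_eq_zero_of_ne hk (M • Pi.single k 1)
  rw [Subgroup.mem_inf] at hE₁
  have hunit : IsUnit (((E₁ * M : GL ι ℤ) : Matrix ι ι ℤ) b k) :=
    isUnit_apply_of_mem_fixer (mul_mem hE₁.2 hM) hk fun a ha hab ↦ by
      simpa [← smul_single_one_apply, mul_smul] using hzero a ha hab
  rw [← smul_single_one_apply] at hunit
  obtain ⟨E₂, hE₂, hE₂v⟩ := exists_smul_eq_single_of_isUnit hb hk hunit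
  rw [Subgroup.mem_inf] at hE₂
  refine ⟨E₂ * E₁, mul_mem hE₂.1 hE₁.1,
    mem_fixer_insert.2 ⟨?_, mul_mem (mul_mem hE₂.2 hE₁.2) hM⟩⟩
  rw [mul_assoc, mul_smul, hE₂v]

theorem mem_elementarySubgroup_of_mem_fixer_compl (D : Finset ι) {M : GL ι ℤ}
    (hM : M ∈ fixer Dᶜ) : M ∈ elementarySubgroup ι := by
  induction D using Finset.induction_on generalizing M with
  | empty =>
    rw [Finset.compl_empty, fixer_univ, Subgroup.mem_bot] at hM
    exact hM ▸ one_mem _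
  | insert k D hk ih =>
    have hk' : k ∉ (insert k D)ᶜ := Finset.notMem_compl.2 (Finset.mem_insert_self k D)
    obtain ⟨E, hE, hEM⟩ := exists_mul_mem_fixer_insert hk' hM
    rw [Finset.insert_compl_insert hk] at hEM
    simpa using mul_mem (inv_mem hE) (ih hEM)

theorem closure_elementaryGenerators_eq_top :
    Subgroup.closure (elementaryGenerators ι) = ⊤ :=
  eq_top_iff.2 fun _ _ ↦
    mem_elementarySubgroup_of_mem_fixer_compl Finset.univ (by simp [fixer_empty])

end Matrix.GeneralLinearGroup

theorem stmt_8 (n : ℕ) :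
    Subgroup.closure
      {M : Matrix.GeneralLinearGroup (Fin n) ℤ |
        (∃ i, (M : Matrix (Fin n) (Fin n) ℤ) = 1 + Matrix.single i i (-2)) ∨
        (∃ i j, i ≠ j ∧ (M : Matrix (Fin n) (Fin n) ℤ) = 1 + Matrix.single i j 1)} = ⊤ :=
  Matrix.GeneralLinearGroup.closure_elementaryGenerators_eq_top
end

section
/- For any unimodular n × n integer matrix A, there exist words r₁,…,rₙ in the free group on n generators whose exponent-sum matrix is A and such that the group they present is trivial. -/
/-!
Elementary row operations over `ℤ` reduce every unimodular matrix to the identity: Euclid's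
algorithm on the first column produces a single entry `±1`, and induction on the size handles
the complementary minor. Each row operation is mirrored by a Nielsen move on a tuple of
relators (multiply `rᵢ` by a power of `rⱼ`, replace `rᵢ` by `rᵢ⁻¹`, permute), which acts on the
exponent-sum rows in the same way and does not change the normal closure. Starting from the
generators `aᵢ`, which realize the identity matrix and normally generate `F`, we therefore
reach relators with exponent-sum matrix `A` that still normally generate `F`.
-/

open Subgroup

theorem Subgroup.normalClosure_range_update {G ι : Type*} [Group G] [DecidableEq ι]
    {r : ι → G} {i : ι} {x : G} (hx : x ∈ normalClosure (Set.range r))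
    (hi : r i ∈ normalClosure (Set.range (Function.update r i x))) :
    normalClosure (Set.range (Function.update r i x)) = normalClosure (Set.range r) := by
  apply le_antisymm <;> refine normalClosure_le_normal (Set.range_subset_iff.2 fun k => ?_) <;>
    rcases eq_or_ne k i with rfl | hk
  · simpa using hx
  · simpa [hk] using subset_normalClosure (Set.mem_range_self k)
  · exact hi
  · simpa [hk] using subset_normalClosure (Set.mem_range_self (f := Function.update r i x) k)

theorem Int.natAbs_emod_lt (a : ℤ) {b : ℤ} (hb : b ≠ 0) : (a % b).natAbs < b.natAbs := by
  have := Int.emod_nonneg a hb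
  have := Int.emod_lt_abs a hb
  rw [Int.abs_eq_natAbs] at this
  omega

inductive Matrix.RowReducesToOne {n : ℕ} : Matrix (Fin n) (Fin n) ℤ → Prop
  | one : RowReducesToOne 1
  | of_updateRow_add {A : Matrix (Fin n) (Fin n) ℤ} {i j : Fin n} (hij : i ≠ j) (c : ℤ) :
      RowReducesToOne (A.updateRow i (A i + c • A j)) → RowReducesToOne A
  | of_updateRow_smul {A : Matrix (Fin n) (Fin n) ℤ} (i : Fin n) (u : ℤˣ) :
      RowReducesToOne (A.updateRow i (u • A i)) → RowReducesToOne A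
  | of_submatrix_swap {A : Matrix (Fin n) (Fin n) ℤ} (i j : Fin n) :
      RowReducesToOne (A.submatrix (Equiv.swap i j) id) → RowReducesToOne A

namespace Matrix.RowReducesToOne

variable {n : ℕ}

theorem of_updateRow_add_sum {A : Matrix (Fin n) (Fin n) ℤ} {i : Fin n} {s : Finset (Fin n)}
    (hi : i ∉ s) (c : Fin n → ℤ)
    (h : RowReducesToOne (A.updateRow i (A i + ∑ j ∈ s, c j • A j))) : RowReducesToOne A := by
  induction s using Finset.induction_on generalizing A with
  | empty => simpa using h
  | insert a s ha ih =>
    have hia : i ≠ a := fun h => hi (h ▸ Finset.mem_insert_self i s)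
    refine of_updateRow_add hia (c a) (ih (fun h => hi (Finset.mem_insert_of_mem h)) ?_)
    have hs : ∀ j ∈ s, c j • (A.updateRow i (A i + c a • A a)) j = c j • A j := by
      rintro j hj
      rw [updateRow_ne (ne_of_mem_of_not_mem hj fun h => hi (Finset.mem_insert_of_mem h))]
    rw [Finset.sum_insert ha, ← add_assoc] at h
    rwa [updateRow_idem, updateRow_self, Finset.sum_congr rfl hs]

theorem of_submatrix_succ {B : Matrix (Fin (n + 1)) (Fin (n + 1)) ℤ} (h₀ : B 0 0 = 1)
    (hsucc : ∀ k : Fin n, B k.succ 0 = 0) (h : RowReducesToOne (B.submatrix Fin.succ Fin.succ)) :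
    RowReducesToOne B := by
  generalize hC : B.submatrix Fin.succ Fin.succ = C at h
  induction h generalizing B with
  | one =>
    have hB (k l : Fin n) : B k.succ l.succ = (1 : Matrix (Fin n) (Fin n) ℤ) k l :=
      congrFun (congrFun hC k) l
    refine of_updateRow_add_sum (i := 0) (s := Finset.univ.map (Fin.succEmb n)) (by simp)
      (fun j => -B 0 j) ?_
    convert one
    ext k l
    cases k using Fin.cases <;> cases l using Fin.cases <;>
      simp [hB, hsucc, h₀, one_apply, (Fin.succ_ne_zero _).symm]
  | of_updateRow_add hij c _ ih =>
    refine of_updateRow_add ((Fin.succ_injective _).ne hij) c (ih ?_ ?_ ?_)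
    · rwa [updateRow_ne (Fin.succ_ne_zero _).symm]
    · simp [updateRow_apply, hsucc]
    · subst hC; ext k l; simp [updateRow_apply]
  | of_updateRow_smul i u _ ih =>
    refine of_updateRow_smul i.succ u (ih ?_ ?_ ?_)
    · rwa [updateRow_ne (Fin.succ_ne_zero _).symm]
    · simp [updateRow_apply, hsucc]
    · subst hC; ext k l; simp [updateRow_apply]
  | of_submatrix_swap i j _ ih =>
    refine of_submatrix_swap i.succ j.succ (ih ?_ ?_ ?_)
    · rwa [submatrix_apply, Equiv.swap_apply_of_ne_of_ne (Fin.succ_ne_zero _).symm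
        (Fin.succ_ne_zero _).symm]
    · simp [(Fin.succ_injective _).swap_apply, hsucc]
    · subst hC; ext k l; simp [(Fin.succ_injective _).swap_apply]

theorem of_col_zero_eq_zero_of_ne
    (hpivot : ∀ B : Matrix (Fin (n + 1)) (Fin (n + 1)) ℤ, IsUnit B.det → B 0 0 = 1 →
      (∀ k : Fin n, B k.succ 0 = 0) → RowReducesToOne B)
    {A : Matrix (Fin (n + 1)) (Fin (n + 1)) ℤ} (hA : IsUnit A.det) {i : Fin (n + 1)}
    (hi : ∀ k ≠ i, A k 0 = 0) : RowReducesToOne A := by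
  have hdvd : A i 0 ∣ A.det := by
    rw [det_succ_column_zero]
    refine Finset.dvd_sum fun k _ => ?_
    rcases eq_or_ne k i with rfl | hk
    · exact (dvd_mul_left _ _).mul_right _
    · simp [hi k hk]
  obtain ⟨u, hu⟩ := isUnit_of_dvd_unit hdvd hA
  refine of_submatrix_swap 0 i (of_updateRow_smul 0 u⁻¹ (hpivot _ ?_ ?_ fun k => ?_))
  · rw [Units.smul_def, det_updateRow_smul, updateRow_eq_self, det_permute]
    exact (Units.isUnit _).mul ((Units.isUnit _).mul hA)
  · simp [← hu, Units.smul_def]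
  · rw [updateRow_ne (Fin.succ_ne_zero k)]
    exact hi _ (by simp [Equiv.swap_apply_eq_iff, Fin.succ_ne_zero])

theorem of_isUnit_det_of_pivot
    (hpivot : ∀ B : Matrix (Fin (n + 1)) (Fin (n + 1)) ℤ, IsUnit B.det → B 0 0 = 1 →
      (∀ k : Fin n, B k.succ 0 = 0) → RowReducesToOne B)
    {A : Matrix (Fin (n + 1)) (Fin (n + 1)) ℤ} (hA : IsUnit A.det) : RowReducesToOne A := by
  induction hs : ∑ k, (A k 0).natAbs using Nat.strong_induction_on generalizing A with
  | _ s ih =>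
  by_cases hpair : ∃ i j, i ≠ j ∧ A j 0 ≠ 0 ∧ (A j 0).natAbs ≤ (A i 0).natAbs
  · obtain ⟨i, j, hij, hj, hle⟩ := hpair
    have hrem : (A.updateRow i (A i + (-(A i 0 / A j 0)) • A j)) i 0 = A i 0 % A j 0 := by
      simp [Int.emod_def, mul_comm, sub_eq_add_neg]
    have hlt : (A i 0 % A j 0).natAbs < (A i 0).natAbs :=
      (Int.natAbs_emod_lt _ hj).trans_le hle
    refine of_updateRow_add hij (-(A i 0 / A j 0))
      (ih _ ?_ (by rwa [det_updateRow_add_smul_self _ hij]) rfl)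
    rw [← hs]
    refine Finset.sum_lt_sum (fun k _ => ?_) ⟨i, Finset.mem_univ _, hrem ▸ hlt⟩
    rcases eq_or_ne k i with rfl | hk
    · exact hrem ▸ hlt.le
    · rw [updateRow_ne hk]
  · push Not at hpair
    obtain ⟨i, hi⟩ : ∃ i, A i 0 ≠ 0 := by
      by_contra! h
      exact not_isUnit_zero (det_eq_zero_of_column_eq_zero 0 h ▸ hA)
    refine of_col_zero_eq_zero_of_ne hpivot hA (i := i) fun k hk => ?_
    by_contra hk0
    exact lt_asymm (hpair i k hk.symm hk0) (hpair k i hk hi)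

theorem of_isUnit_det : ∀ {n : ℕ} {A : Matrix (Fin n) (Fin n) ℤ}, IsUnit A.det → RowReducesToOne A
  | 0, A, _ => Subsingleton.elim (1 : Matrix (Fin 0) (Fin 0) ℤ) A ▸ one
  | n + 1, _, hA => by
    refine of_isUnit_det_of_pivot (fun B hB h₀ hsucc => of_submatrix_succ h₀ hsucc
      (of_isUnit_det ?_)) hA
    simpa [det_succ_column_zero, Fin.sum_univ_succ, h₀, hsucc] using hB

theorem exists_realization {G : Type*} [Group G] (f : G →* Multiplicative (Fin n → ℤ))
    {r₀ : Fin n → G} (h₀ : ∀ i, (f (r₀ i)).toAdd = (1 : Matrix (Fin n) (Fin n) ℤ) i)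
    {A : Matrix (Fin n) (Fin n) ℤ} (hA : RowReducesToOne A) :
    ∃ r : Fin n → G, (∀ i, (f (r i)).toAdd = A i) ∧
      normalClosure (Set.range r) = normalClosure (Set.range r₀) := by
  induction hA with
  | one => exact ⟨r₀, h₀, rfl⟩
  | @of_updateRow_add A i j hij c _ ih =>
    obtain ⟨r, hr, hcl⟩ := ih
    have hri := hr i
    have hrj := hr j
    simp only [updateRow_self, updateRow_ne hij.symm] at hri hrj
    refine ⟨Function.update r i (r i * r j ^ (-c)), fun k => ?_,
      (normalClosure_range_update ?_ ?_).trans hcl⟩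
    · rcases eq_or_ne k i with rfl | hk
      · simp [hri, hrj]
      · simpa [hk] using hr k
    · exact mul_mem (subset_normalClosure (Set.mem_range_self i))
        (zpow_mem (subset_normalClosure (Set.mem_range_self j)) _)
    · simpa [Function.update_of_ne hij.symm, mul_assoc] using mul_mem
        (subset_normalClosure (Set.mem_range_self (f := Function.update r i (r i * r j ^ (-c))) i))
        (zpow_mem (subset_normalClosure (Set.mem_range_self j)) c)
  | @of_updateRow_smul A i u _ ih =>
    obtain ⟨r, hr, hcl⟩ := ih
    have hri := hr i
    simp only [updateRow_self] at hri
    refine ⟨Function.update r i (r i ^ (u : ℤ)), fun k => ?_,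
      (normalClosure_range_update ?_ ?_).trans hcl⟩
    · rcases eq_or_ne k i with rfl | hk
      · simp [hri, ← Units.smul_def, smul_smul, Int.units_mul_self]
      · simpa [hk] using hr k
    · exact zpow_mem (subset_normalClosure (Set.mem_range_self i)) _
    · have hu : (r i ^ (u : ℤ)) ^ (u : ℤ) = r i := by
        rw [← _root_.zpow_mul, ← Units.val_mul, Int.units_mul_self, Units.val_one, zpow_one]
      simpa [hu] using zpow_mem (subset_normalClosure
        (Set.mem_range_self (f := Function.update r i (r i ^ (u : ℤ))) i)) (u : ℤ)
  | of_submatrix_swap i j _ ih =>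
    obtain ⟨r, hr, hcl⟩ := ih
    refine ⟨r ∘ Equiv.swap i j, fun k => by rw [Function.comp_apply, hr]; ext; simp, ?_⟩
    rw [← hcl, (Equiv.swap i j).surjective.range_comp]

end Matrix.RowReducesToOne

theorem stmt_10 (n : ℕ) (A : Matrix (Fin n) (Fin n) ℤ) (hA : IsUnit A.det) :
    ∃ r : Fin n → FreeGroup (Fin n),
      (∀ i, Multiplicative.toAdd
        (FreeGroup.lift (fun j : Fin n => Multiplicative.ofAdd (Pi.single j (1 : ℤ))) (r i)) = A i) ∧
      Subsingleton (FreeGroup (Fin n) ⧸ Subgroup.normalClosure (Set.range r)) := by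
  obtain ⟨r, hr, hcl⟩ := (Matrix.RowReducesToOne.of_isUnit_det hA).exists_realization
    (FreeGroup.lift fun j => Multiplicative.ofAdd (Pi.single j 1)) (r₀ := FreeGroup.of)
    fun i => by
      rw [FreeGroup.lift_apply_of, toAdd_ofAdd]
      exact funext fun j => Matrix.one_eq_pi_single.symm
  have htop : normalClosure (Set.range (FreeGroup.of : Fin n → _)) = ⊤ :=
    eq_top_iff.2 ((FreeGroup.closure_range_of _).ge.trans closure_le_normalClosure)
  refine ⟨r, hr, ?_⟩
  rw [hcl, htop]
  exact QuotientGroup.subsingleton_quotient_top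
end
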